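/- Suppose each vertex monoid M_α satisfies the ascending chain condition on principal left ideals. Let {w_i : i ∈ ℕ} be a set of complete blocks in X*, all of the same length n and containing no left invertible letters, such that GP[w_1] ⊆ GP[w_2] ⊆ ⋯. Then this chain of principal left ideals terminates, i.e. there is d with GP[w_d] = GP[w_{d+k}] for all k ≥ 1. -/

import Mathlib

/-! Common definitions for graph products of monoids. -/

variable {V : Type*}

/-- A letter of the graph product alphabet: an element of one of the vertex monoids,
tagged by its vertex (its *support*). -/
abbrev GPLetter (M : V → Type*) : Type _ := (α : V) × M α

/-- The defining relations of the graph product: identity letters are trivial,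
letters from the same vertex monoid multiply, and letters at adjacent vertices commute. -/
def gpRel (G : SimpleGraph V) (M : V → Type*) [∀ α, Monoid (M α)] :
    FreeMonoid (GPLetter M) → FreeMonoid (GPLetter M) → Prop := fun w₁ w₂ =>
  (∃ α : V, w₁ = FreeMonoid.of (⟨α, (1 : M α)⟩ : GPLetter M) ∧ w₂ = 1) ∨
  (∃ (α : V) (x y : M α),
      w₁ = FreeMonoid.of (⟨α, x⟩ : GPLetter M) * FreeMonoid.of (⟨α, y⟩ : GPLetter M) ∧
      w₂ = FreeMonoid.of (⟨α, x * y⟩ : GPLetter M)) ∨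
  (∃ (α β : V) (x : M α) (y : M β), G.Adj α β ∧
      w₁ = FreeMonoid.of (⟨α, x⟩ : GPLetter M) * FreeMonoid.of (⟨β, y⟩ : GPLetter M) ∧
      w₂ = FreeMonoid.of (⟨β, y⟩ : GPLetter M) * FreeMonoid.of (⟨α, x⟩ : GPLetter M))

/-- The congruence on the free monoid generated by the graph product relations. -/
def gpCon (G : SimpleGraph V) (M : V → Type*) [∀ α, Monoid (M α)] :
    Con (FreeMonoid (GPLetter M)) := conGen (gpRel G M)

/-- The graph product of the monoids `M α` with respect to the graph `G`. -/
abbrev GraphProduct (G : SimpleGraph V) (M : V → Type*) [∀ α, Monoid (M α)] :=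
  (gpCon G M).Quotient

/-- The class `[w]` in the graph product of a word `w` (given as a list of letters). -/
def gpMk (G : SimpleGraph V) (M : V → Type*) [∀ α, Monoid (M α)]
    (l : List (GPLetter M)) : GraphProduct G M :=
  (gpCon G M).mk' (FreeMonoid.ofList l)

/-- A word is reduced: no letter is an identity, and between any two letters with the
same support there is a letter whose support is not adjacent to it. -/
def GPReduced (G : SimpleGraph V) (M : V → Type*) [∀ α, Monoid (M α)]
    (l : List (GPLetter M)) : Prop :=
  (∀ x ∈ l, x.2 ≠ 1) ∧
    ∀ i j : Fin l.length, i < j → (l.get i).1 = (l.get j).1 →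
      ∃ k : Fin l.length, i < k ∧ k < j ∧ ¬ G.Adj (l.get i).1 (l.get k).1

/-- One shuffle: transpose an adjacent pair of letters whose supports are adjacent in `G`. -/
def ShuffleStep (G : SimpleGraph V) (M : V → Type*)
    (l₁ l₂ : List (GPLetter M)) : Prop :=
  ∃ (u v : List (GPLetter M)) (x y : GPLetter M),
    G.Adj x.1 y.1 ∧ l₁ = u ++ x :: y :: v ∧ l₂ = u ++ y :: x :: v

/-- Two words are shuffle equivalent if one is obtained from the other by a finite
sequence of shuffles. -/
def ShuffleEquiv (G : SimpleGraph V) (M : V → Type*) :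
    List (GPLetter M) → List (GPLetter M) → Prop :=
  Relation.ReflTransGen (ShuffleStep G M)

/-- A letter is left invertible if it is left invertible in its vertex monoid. -/
def LeftInvertibleLetter (M : V → Type*) [∀ α, Monoid (M α)] (x : GPLetter M) : Prop :=
  ∃ y : M x.1, y * x.2 = 1

/-- The set of supports of the letters of a word. -/
def suppSet (M : V → Type*) (l : List (GPLetter M)) : Set V := {α | ∃ x ∈ l, x.1 = α}

/-- A complete block: a reduced word whose support induces a complete subgraph of `G`. -/
def CompleteBlock (G : SimpleGraph V) (M : V → Type*) [∀ α, Monoid (M α)]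
    (l : List (GPLetter M)) : Prop :=
  GPReduced G M l ∧ ∀ x ∈ l, ∀ y ∈ l, x.1 ≠ y.1 → G.Adj x.1 y.1

/-- A list of blocks is a left Foata normal form: the concatenation is reduced, each
block is nonempty with complete support, and each letter of a block fails to be
adjacent to some letter of the preceding block. -/
def LeftFoataForm (G : SimpleGraph V) (M : V → Type*) [∀ α, Monoid (M α)]
    (blocks : List (List (GPLetter M))) : Prop :=
  GPReduced G M blocks.flatten ∧
  (∀ b ∈ blocks, b ≠ [] ∧ ∀ x ∈ b, ∀ y ∈ b, x.1 ≠ y.1 → G.Adj x.1 y.1) ∧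
  List.Chain' (fun b₁ b₂ => ∀ y ∈ b₂, ∃ x ∈ b₁, ¬ G.Adj x.1 y.1) blocks

/-- The principal left ideal `S a = {s * a : s ∈ S}` of a monoid. -/
def plIdeal {S : Type*} [Monoid S] (a : S) : Set S := Set.range (· * a)

/-- The ascending chain condition on principal left ideals. -/
def ACCPL (S : Type*) [Monoid S] : Prop :=
  ∀ a : ℕ → S, (∀ n, plIdeal (a n) ⊆ plIdeal (a (n + 1))) →
    ∃ n, ∀ k, plIdeal (a (n + k)) = plIdeal (a n)

/-- `A` is a left ideal of the monoid `S`. -/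
def IsLeftIdeal {S : Type*} [Monoid S] (A : Set S) : Prop :=
  A.Nonempty ∧ ∀ s : S, ∀ a ∈ A, s * a ∈ A

/-- `A` is generated, as a left ideal, by a finite subset of itself. -/
def IsFGLeftIdeal {S : Type*} [Monoid S] (A : Set S) : Prop :=
  ∃ F : Finset S, ↑F ⊆ A ∧ A = {x | ∃ s : S, ∃ a ∈ F, x = s * a}

/-- A monoid is weakly left noetherian if every left ideal is finitely generated. -/
def WeaklyLeftNoetherian (S : Type*) [Monoid S] : Prop :=
  ∀ A : Set S, IsLeftIdeal A → IsFGLeftIdeal A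

/-- A monoid is left ideal Howson if the intersection of any two principal left ideals
is empty or finitely generated. -/
def LeftIdealHowson (S : Type*) [Monoid S] : Prop :=
  ∀ a b : S, plIdeal a ∩ plIdeal b = ∅ ∨ IsFGLeftIdeal (plIdeal a ∩ plIdeal b)

/-- An LCM monoid: intersections of principal left ideals are empty or principal. -/
def LCMMonoid (S : Type*) [Monoid S] : Prop :=
  ∀ a b : S, plIdeal a ∩ plIdeal b = ∅ ∨ ∃ c : S, plIdeal a ∩ plIdeal b = plIdeal c

/-- A left congruence on a monoid. -/
def IsLeftCongruence {S : Type*} [Monoid S] (ρ : S → S → Prop) : Prop :=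
  Equivalence ρ ∧ ∀ u s t : S, ρ s t → ρ (u * s) (u * t)

/-- The least left congruence containing a set of pairs. -/
def leftConGen {S : Type*} [Monoid S] (R : Set (S × S)) : S → S → Prop := fun s t =>
  ∀ ρ : S → S → Prop, IsLeftCongruence ρ → (∀ p ∈ R, ρ p.1 p.2) → ρ s t

/-- A monoid is finitely left equated if every left annihilator `l(a)` is the left
congruence generated by a finite set. -/
def FinitelyLeftEquated (S : Type*) [Monoid S] : Prop :=
  ∀ a : S, ∃ R : Set (S × S), R.Finite ∧ ∀ s t : S, s * a = t * a ↔ leftConGen R s t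

/-- A monoid is a group: every element has a two-sided inverse. -/
def IsGroupMonoid (S : Type*) [Monoid S] : Prop :=
  ∀ a : S, ∃ b : S, a * b = 1 ∧ b * a = 1

/-- Weakly left coherent: left ideal Howson and finitely left equated. -/
def WeaklyLeftCoherent (S : Type*) [Monoid S] : Prop :=
  LeftIdealHowson S ∧ FinitelyLeftEquated S

/-- The restricted direct product of a family of monoids: elements of the direct
product with only finitely many non-identity coordinates. -/
def restrictedDirectProduct {ι : Type*} (M : ι → Type*) [∀ i, Monoid (M i)] :
    Submonoid (∀ i, M i) where
  carrier := {f | {i | f i ≠ 1}.Finite}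
  one_mem' := by simp
  mul_mem' := by
    intro f g hf hg
    refine Set.Finite.subset (hf.union hg) ?_
    intro i hi
    rw [Set.mem_union]
    by_contra h
    push_neg at h
    obtain ⟨h1, h2⟩ := h
    simp only [Set.mem_setOf_eq, not_not] at h1 h2
    apply hi
    show f i * g i = 1
    rw [h1, h2, one_mul]

/-- Condition (i) for relative completeness: both monoids have two elements, at least
one is not a group, and both vertices are adjacent to every other vertex. -/
def RCcondI (G : SimpleGraph V) (M : V → Type*) [∀ α, Monoid (M α)]
    (α β : V) : Prop :=
  Nat.card (M α) = 2 ∧ Nat.card (M β) = 2 ∧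
  (¬ IsGroupMonoid (M α) ∨ ¬ IsGroupMonoid (M β)) ∧
  ∀ γ : V, γ ≠ α → γ ≠ β → G.Adj α γ ∧ G.Adj β γ

/-- `G` is relatively complete with respect to the family `M` of vertex monoids. -/
def RelativelyComplete (G : SimpleGraph V) (M : V → Type*)
    [∀ α, Monoid (M α)] : Prop :=
  (∀ α β : V, α ≠ β → ¬ G.Adj α β →
      RCcondI G M α β ∨ (IsGroupMonoid (M α) ∧ IsGroupMonoid (M β))) ∧
  ∀ α β α' β' : V, α ≠ β → ¬ G.Adj α β → RCcondI G M α β →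
    α' ≠ β' → ¬ G.Adj α' β' → RCcondI G M α' β' →
    (α = α' ∧ β = β') ∨ (α = β' ∧ β = α')

/-! Projecting onto the vertex monoids gives a homomorphism from the graph product to the
direct product `∀ α, M α`. A complete block has pairwise adjacent, hence distinct, supports,
so it is the image of its coordinate vector under a homomorphism back from the direct product
(its letters commute). A chain `GP[w₁] ⊆ GP[w₂] ⊆ ⋯` projects to chains in the vertex
monoids; since no letter is left invertible, the supports of the `wᵢ` can only shrink, so,
the lengths being equal, they all coincide. ACCPL in the finitely many vertex monoids of this
common support stabilises all projected chains from some index on, and the homomorphism back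
lifts the stabilised coordinatewise divisibility to the graph product. -/

section PrincipalLeftIdeal

variable {S T : Type*} [Monoid S] [Monoid T]

theorem plIdeal_subset_iff {a b : S} : plIdeal a ⊆ plIdeal b ↔ ∃ c, c * b = a := by
  refine ⟨fun h => h ⟨1, one_mul a⟩, ?_⟩
  rintro ⟨c, rfl⟩ _ ⟨s, rfl⟩
  exact ⟨s * c, mul_assoc s c b⟩

theorem plIdeal_one : plIdeal (1 : S) = Set.univ :=
  Set.eq_univ_of_forall fun s => ⟨s, mul_one s⟩

theorem plIdeal_map_subset (f : S →* T) {a b : S} (h : plIdeal a ⊆ plIdeal b) :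
    plIdeal (f a) ⊆ plIdeal (f b) := by
  obtain ⟨c, rfl⟩ := plIdeal_subset_iff.1 h
  exact plIdeal_subset_iff.2 ⟨f c, (map_mul f c b).symm⟩

theorem plIdeal_pi_subset {ι : Type*} {N : ι → Type*} [∀ i, Monoid (N i)] {f g : ∀ i, N i}
    (h : ∀ i, plIdeal (f i) ⊆ plIdeal (g i)) : plIdeal f ⊆ plIdeal g := by
  simp only [plIdeal_subset_iff] at h ⊢
  choose c hc using h
  exact ⟨c, funext hc⟩

theorem ACCPL.eventually_stable (hS : ACCPL S) {a : ℕ → S}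
    (ha : ∀ n, plIdeal (a n) ⊆ plIdeal (a (n + 1))) :
    ∀ᶠ m in Filter.atTop, ∀ k, plIdeal (a (m + k)) = plIdeal (a m) := by
  obtain ⟨n, hn⟩ := hS a ha
  filter_upwards [Filter.eventually_ge_atTop n] with m hm k
  obtain ⟨j, rfl⟩ := Nat.exists_eq_add_of_le hm
  rw [add_assoc, hn, hn]

end PrincipalLeftIdeal

theorem List.prod_map_mul_of_pairwise_commute {ι N : Type*} [Monoid N] {l : List ι}
    {f g : ι → N} (h : l.Pairwise fun i j => Commute (g i) (f j)) :
    (l.map fun i => f i * g i).prod = (l.map f).prod * (l.map g).prod := by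
  induction l with
  | nil => simp
  | cons i l ih =>
    rw [List.pairwise_cons] at h
    have hcomm : Commute (g i) (l.map f).prod :=
      Commute.list_prod_right _ _ fun x hx => by
        obtain ⟨j, hj, rfl⟩ := List.mem_map.1 hx
        exact h.1 j hj
    simp only [List.map_cons, List.prod_cons, ih h.2, mul_assoc, hcomm.left_comm]

theorem List.Nodup.perm_of_subset_of_length_eq {α : Type*} {l₁ l₂ : List α} (hl : l₁.Nodup)
    (hsub : l₁ ⊆ l₂) (hlen : l₁.length = l₂.length) : l₁.Perm l₂ :=
  (List.subperm_of_subset hl hsub).perm_of_length_le hlen.ge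

section GraphProduct

variable (G : SimpleGraph V) (M : V → Type*) [∀ α, Monoid (M α)]

def gpOf (x : GPLetter M) : GraphProduct G M := (gpCon G M).mk' (FreeMonoid.of x)

theorem gpMk_eq_prod (l : List (GPLetter M)) : gpMk G M l = (l.map (gpOf G M)).prod := by
  induction l with
  | nil => rfl
  | cons x l ih => rw [List.map_cons, List.prod_cons, ← ih]; rfl

variable {G M}

theorem mk'_eq_of_gpRel {u v : FreeMonoid (GPLetter M)} (h : gpRel G M u v) :
    (gpCon G M).mk' u = (gpCon G M).mk' v :=
  (Con.eq _).2 (ConGen.Rel.of _ _ h)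

theorem gpOf_one (α : V) : gpOf G M ⟨α, 1⟩ = 1 :=
  (mk'_eq_of_gpRel (Or.inl ⟨α, rfl, rfl⟩)).trans (map_one _)

theorem gpOf_mul (α : V) (a b : M α) :
    gpOf G M ⟨α, a * b⟩ = gpOf G M ⟨α, a⟩ * gpOf G M ⟨α, b⟩ :=
  ((map_mul _ _ _).symm.trans (mk'_eq_of_gpRel (Or.inr (Or.inl ⟨α, a, b, rfl, rfl⟩)))).symm

theorem commute_gpOf {x y : GPLetter M} (h : G.Adj x.1 y.1) :
    Commute (gpOf G M x) (gpOf G M y) := by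
  simp only [Commute, SemiconjBy, gpOf, ← map_mul]
  exact mk'_eq_of_gpRel (Or.inr (Or.inr ⟨x.1, y.1, x.2, y.2, h, rfl, rfl⟩))

variable (G M) in
open Classical in
noncomputable def gpToPi : GraphProduct G M →* ∀ α, M α :=
  Con.lift (gpCon G M) (FreeMonoid.lift fun x => Pi.mulSingle x.1 x.2) <| Con.conGen_le.2 <| by
    rintro u v (⟨α, rfl, rfl⟩ | ⟨α, a, b, rfl, rfl⟩ | ⟨α, β, a, b, h, rfl, rfl⟩) <;>
      simp only [Con.ker_rel, map_mul, map_one, FreeMonoid.lift_eval_of]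
    · exact Pi.mulSingle_one α
    · exact (Pi.mulSingle_mul α a b).symm
    · exact Pi.mulSingle_commute h.ne a b

open Classical in
theorem gpToPi_gpOf (x : GPLetter M) : gpToPi G M (gpOf G M x) = Pi.mulSingle x.1 x.2 :=
  FreeMonoid.lift_eval_of (fun x : GPLetter M => Pi.mulSingle x.1 x.2) x

open Classical in
theorem gpToPi_gpMk_apply_of_notMem {l : List (GPLetter M)} {α : V}
    (hα : α ∉ l.map Sigma.fst) : gpToPi G M (gpMk G M l) α = 1 := by
  rw [gpMk_eq_prod, map_list_prod, List.map_map, Pi.list_prod_apply, List.map_map]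
  refine List.prod_eq_one fun a ha => ?_
  obtain ⟨x, hx, rfl⟩ := List.mem_map.1 ha
  simp only [Function.comp_apply, gpToPi_gpOf]
  exact Pi.mulSingle_eq_of_ne (by rintro rfl; exact hα (List.mem_map_of_mem hx)) _

open Classical in
theorem gpToPi_gpMk_apply_fst {l : List (GPLetter M)} (hl : (l.map Sigma.fst).Nodup)
    {x : GPLetter M} (hx : x ∈ l) : gpToPi G M (gpMk G M l) x.1 = x.2 := by
  induction l with
  | nil => cases hx
  | cons y l ih =>
    rw [List.map_cons, List.nodup_cons] at hl
    rw [show y :: l = [y] ++ l from rfl, gpMk_eq_prod, List.map_append, List.prod_append,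
      ← gpMk_eq_prod, ← gpMk_eq_prod, map_mul, Pi.mul_apply]
    rcases List.mem_cons.1 hx with rfl | hx
    · rw [gpToPi_gpMk_apply_of_notMem hl.1, mul_one, gpMk_eq_prod, List.map_singleton,
        List.prod_singleton, gpToPi_gpOf, Pi.mulSingle_eq_same]
    · have hne : x.1 ≠ y.1 := by intro h; exact hl.1 (h ▸ List.mem_map_of_mem hx)
      rw [ih hl.2 hx, gpMk_eq_prod, List.map_singleton, List.prod_singleton, gpToPi_gpOf,
        Pi.mulSingle_eq_of_ne hne, one_mul]

variable (G M) in
def gpBlock (σ : List V) (hσ : σ.Pairwise G.Adj) : (∀ α, M α) →* GraphProduct G M where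
  toFun f := (σ.map fun α => gpOf G M ⟨α, f α⟩).prod
  map_one' := List.prod_eq_one <| by simp [gpOf_one]
  map_mul' f g := by
    simp only [Pi.mul_apply, gpOf_mul]
    exact List.prod_map_mul_of_pairwise_commute <|
      hσ.imp fun {i j} h => commute_gpOf (x := ⟨i, g i⟩) (y := ⟨j, f j⟩) h

theorem gpBlock_perm {σ τ : List V} (hσ : σ.Pairwise G.Adj) (hτ : τ.Pairwise G.Adj)
    (hp : σ.Perm τ) : gpBlock G M σ hσ = gpBlock G M τ hτ :=
  MonoidHom.ext fun _ => (hp.map _).prod_eq' <|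
    List.pairwise_map.2 <| hσ.imp fun h => commute_gpOf h

theorem gpMk_eq_gpBlock {l : List (GPLetter M)} (hl : (l.map Sigma.fst).Pairwise G.Adj) :
    gpMk G M l = gpBlock G M _ hl (gpToPi G M (gpMk G M l)) := by
  conv_lhs => rw [gpMk_eq_prod]
  simp only [gpBlock, MonoidHom.coe_mk, OneHom.coe_mk, List.map_map]
  refine congrArg List.prod (List.map_congr_left fun x hx => ?_)
  simp only [Function.comp_apply, gpToPi_gpMk_apply_fst (hl.imp G.ne_of_adj) hx]

end GraphProduct

section CompleteBlock

variable {G : SimpleGraph V} {M : V → Type*} [∀ α, Monoid (M α)]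

theorem CompleteBlock.get_fst_ne {l : List (GPLetter M)} (h : CompleteBlock G M l)
    {i j : Fin l.length} (hij : i < j) : (l.get i).1 ≠ (l.get j).1 := by
  induction j using WellFoundedLT.induction with
  | _ j ih =>
    intro heq
    obtain ⟨k, hik, hkj, hna⟩ := h.1.2 i j hij heq
    refine ih k hkj hik (not_not.1 fun hne => hna ?_)
    exact h.2 _ (l.get_mem i) _ (l.get_mem k) hne

theorem CompleteBlock.pairwise_adj {l : List (GPLetter M)} (h : CompleteBlock G M l) :
    (l.map Sigma.fst).Pairwise G.Adj :=
  List.pairwise_map.2 <| List.pairwise_iff_get.2 fun _ _ hij =>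
    h.2 _ (l.get_mem _) _ (l.get_mem _) (h.get_fst_ne hij)

theorem map_fst_subset_of_plIdeal_subset {l l' : List (GPLetter M)}
    (hl' : (l'.map Sigma.fst).Nodup) (hinv : ∀ x ∈ l', ¬ LeftInvertibleLetter M x)
    (h : plIdeal (gpMk G M l) ⊆ plIdeal (gpMk G M l')) :
    l'.map Sigma.fst ⊆ l.map Sigma.fst := by
  intro α hα
  obtain ⟨x, hx, rfl⟩ := List.mem_map.1 hα
  by_contra hxl
  obtain ⟨c, hc⟩ :=
    plIdeal_subset_iff.1 (plIdeal_map_subset ((Pi.evalMonoidHom M x.1).comp (gpToPi G M)) h)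
  simp only [MonoidHom.coe_comp, Function.comp_apply, Pi.evalMonoidHom_apply,
    gpToPi_gpMk_apply_fst hl' hx, gpToPi_gpMk_apply_of_notMem hxl] at hc
  exact hinv x hx ⟨c, hc⟩

theorem plIdeal_gpMk_subset_of_perm {l l' : List (GPLetter M)}
    (hl : (l.map Sigma.fst).Pairwise G.Adj) (hl' : (l'.map Sigma.fst).Pairwise G.Adj)
    (hp : (l'.map Sigma.fst).Perm (l.map Sigma.fst))
    (h : ∀ α ∈ l.map Sigma.fst,
      plIdeal (gpToPi G M (gpMk G M l') α) ⊆ plIdeal (gpToPi G M (gpMk G M l) α)) :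
    plIdeal (gpMk G M l') ⊆ plIdeal (gpMk G M l) := by
  rw [gpMk_eq_gpBlock hl', gpMk_eq_gpBlock hl, gpBlock_perm hl' hl hp]
  refine plIdeal_map_subset _ (plIdeal_pi_subset fun α => ?_)
  by_cases hα : α ∈ l.map Sigma.fst
  · exact h α hα
  · simp [gpToPi_gpMk_apply_of_notMem hα, plIdeal_one]

end CompleteBlock

/-- ascending chains of principal left ideals generated by complete blocks
of fixed length with no left invertible letters terminate, provided each vertex monoid
satisfies ACCPL. -/
theorem stmt7 {V : Type*} (G : SimpleGraph V) (M : V → Type*) [∀ α, Monoid (M α)]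
    (hacc : ∀ α : V, ACCPL (M α)) (n : ℕ) (w : ℕ → List (GPLetter M))
    (hw : ∀ i, CompleteBlock G M (w i)) (hlen : ∀ i, (w i).length = n)
    (hninv : ∀ i, ∀ x ∈ w i, ¬ LeftInvertibleLetter M x)
    (hchain : ∀ i, plIdeal (gpMk G M (w i)) ⊆ plIdeal (gpMk G M (w (i + 1)))) :
    ∃ d, ∀ k, plIdeal (gpMk G M (w (d + k))) = plIdeal (gpMk G M (w d)) := by
  classical
  set σ : ℕ → List V := fun i => (w i).map Sigma.fst
  have hadj (i : ℕ) : (σ i).Pairwise G.Adj := (hw i).pairwise_adj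
  have hnodup (i : ℕ) : (σ i).Nodup := (hadj i).imp G.ne_of_adj
  have hperm (i : ℕ) : (σ i).Perm (σ 0) := by
    induction i with
    | zero => rfl
    | succ i ih =>
      refine List.Nodup.perm_of_subset_of_length_eq (hnodup _) ?_ ?_ |>.trans ih
      · exact map_fst_subset_of_plIdeal_subset (hnodup _) (hninv _) (hchain i)
      · simp [σ, hlen]
  have hstable := fun α => (hacc α).eventually_stable fun i =>
    plIdeal_map_subset ((Pi.evalMonoidHom M α).comp (gpToPi G M)) (hchain i)
  obtain ⟨d, hd⟩ :=
    ((Filter.eventually_all_finset (σ 0).toFinset).2 fun α _ => hstable α).exists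
  refine ⟨d, fun k => subset_antisymm ?_ (monotone_nat_of_le_succ hchain (d.le_add_right k))⟩
  refine plIdeal_gpMk_subset_of_perm (hadj d) (hadj (d + k))
    ((hperm _).trans (hperm d).symm) fun α hα => ?_
  exact (hd α (List.mem_toFinset.2 ((hperm d).subset hα)) k).subset
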